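/- arXiv:0808.1860 — 3 statements merged into one kernel-verified Lean document; each statement's English description precedes it below -/
import Mathlib

section
/- Let V be a variety with 0⃗ & 1⃗ having the Determining Property, and let A₀, A₁ ∈ V. If [e⃗₀, e⃗₁] is a central element of A₀ × A₁, then e⃗_i is a central element of A_i for i = 0, 1. -/
/-!
Let `(θ, θ')` be the complementary pair of the central element `e⃗` of `A × B`. On `(A × B)²`,
the element `[e⃗, e⃗]` lies between `0⃗` and `1⃗` both for `(θ × θ, θ' × θ')` and for its conjugate
under the automorphism exchanging the two `B`-coordinates; by the Determining Property the two
pairs coincide. Hence `θ` and `θ'` relate first coordinates independently of the second ones,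
so they induce a complementary pair on `A` with `e⃗₀` between `0⃗` and `1⃗`, and `e⃗₀` is central.
The symmetry `A × B ≅ B × A` gives `e⃗₁`. Products stay in the variety because `T` is equational.
-/

open FirstOrder Language

universe u v w

namespace Paper

variable {L : FirstOrder.Language.{v, w}}

/-- The direct product of two `L`-structures, with pointwise operations. -/
instance prodStructure (A : Type*) (B : Type*) [L.Structure A] [L.Structure B] :
    L.Structure (A × B) where
  funMap f x := (Structure.funMap f fun i => (x i).1, Structure.funMap f fun i => (x i).2)
  RelMap r x := Structure.RelMap r (fun i => (x i).1) ∧ Structure.RelMap r fun i => (x i).2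

/-- The interpretation of a closed term in an algebra. -/
def interp (A : Type u) [L.Structure A] (t : L.Term Empty) : A := t.realize Empty.elim

/-- A congruence of an `L`-structure: an equivalence relation compatible with all
basic operations. -/
structure Congruence (L : FirstOrder.Language.{v, w}) (A : Type u) [L.Structure A] where
  rel : A → A → Prop
  refl : ∀ a, rel a a
  symm : ∀ {a b}, rel a b → rel b a
  trans : ∀ {a b c}, rel a b → rel b c → rel a c
  compat : ∀ {n} (f : L.Functions n) (x y : Fin n → A),
    (∀ i, rel (x i) (y i)) → rel (Structure.funMap f x) (Structure.funMap f y)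

variable {A : Type u} [L.Structure A]

/-- `θ ⋄ θ* = Δ` : `θ ∩ θ* = Δ` and `θ ∘ θ* = ∇`. -/
def Complementary (θ θ' : Congruence L A) : Prop :=
  (∀ a b : A, θ.rel a b → θ'.rel a b → a = b) ∧ ∀ a b : A, ∃ c : A, θ.rel a c ∧ θ'.rel c b

/-- A factor congruence: the kernel of a projection onto a direct factor,
equivalently a congruence possessing a complementary factor congruence. -/
def IsFactorCongruence (θ : Congruence L A) : Prop := ∃ θ' : Congruence L A, Complementary θ θ'

/-- The meet of two congruences. -/
def Congruence.inf (θ φ : Congruence L A) : Congruence L A where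
  rel a b := θ.rel a b ∧ φ.rel a b
  refl a := ⟨θ.refl a, φ.refl a⟩
  symm h := ⟨θ.symm h.1, φ.symm h.2⟩
  trans h h' := ⟨θ.trans h.1 h'.1, φ.trans h.2 h'.2⟩
  compat f x y h := ⟨θ.compat f x y fun i => (h i).1, φ.compat f x y fun i => (h i).2⟩

/-- The order on congruences. -/
def Congruence.le (θ φ : Congruence L A) : Prop := ∀ a b : A, θ.rel a b → φ.rel a b

/-- The join of two congruences in the congruence lattice. -/
def Congruence.sup (θ φ : Congruence L A) : Congruence L A where
  rel a b := ∀ ψ : Congruence L A, θ.le ψ → φ.le ψ → ψ.rel a b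
  refl a ψ _ _ := ψ.refl a
  symm h ψ h1 h2 := ψ.symm (h ψ h1 h2)
  trans h h' ψ h1 h2 := ψ.trans (h ψ h1 h2) (h' ψ h1 h2)
  compat f x y h ψ h1 h2 := ψ.compat f x y fun i => h i ψ h1 h2

/-- A theory is equational when each axiom is a universally quantified equation. -/
def IsEquational (T : L.Theory) : Prop :=
  ∀ φ ∈ T, ∃ (n : ℕ) (t₁ t₂ : L.Term (Empty ⊕ Fin n)), φ = (t₁.bdEqual t₂).alls

/-- `Mod(T)` is a variety with `0⃗` & `1⃗`, witnessed by closed terms `z`, `o`. -/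
def HasZeroOne (T : L.Theory) {l : ℕ} (z o : Fin l → L.Term Empty) : Prop :=
  ∀ (A : Type u) [L.Structure A], A ⊨ T → Nonempty A →
    (∀ i, interp A (z i) = interp A (o i)) → ∀ x y : A, x = y

variable {l : ℕ} (z o : Fin l → L.Term Empty)

/-- `0⃗ θ e⃗ θ* 1⃗`. -/
def Between (θ θ' : Congruence L A) (e : Fin l → A) : Prop :=
  (∀ i, θ.rel (interp A (z i)) (e i)) ∧ ∀ i, θ'.rel (e i) (interp A (o i))

/-- `e⃗` is a central element of `A`. -/
def IsCentral (e : Fin l → A) : Prop :=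
  ∃ (A₁ : Type u) (A₂ : Type u) (_ : L.Structure A₁) (_ : L.Structure A₂)
    (g : A ≃[L] A₁ × A₂), ∀ i, g (e i) = (interp A₁ (z i), interp A₂ (o i))

/-- `e⃗` and `f⃗` are complementary central elements of `A`. -/
def AreComplementaryCentral (e f : Fin l → A) : Prop :=
  ∃ (A₁ : Type u) (A₂ : Type u) (_ : L.Structure A₁) (_ : L.Structure A₂)
    (g : A ≃[L] A₁ × A₂),
      (∀ i, g (e i) = (interp A₁ (z i), interp A₂ (o i))) ∧
      (∀ i, g (f i) = (interp A₁ (o i), interp A₂ (z i)))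

variable (T : L.Theory)

/-- The Determining Property. -/
def HasDeterminingProperty : Prop :=
  ∀ (A : Type u) [L.Structure A], A ⊨ T → Nonempty A →
    (∀ θ θ' : Congruence L A, Complementary θ θ' → ∃! e : Fin l → A, Between z o θ θ' e) ∧
    (∀ (θ θ' : Congruence L A) (e : Fin l → A), Complementary θ θ' → Between z o θ θ' e →
      IsCentral z o e) ∧
    (∀ e : Fin l → A, IsCentral z o e →
      ∃! p : Congruence L A × Congruence L A, Complementary p.1 p.2 ∧ Between z o p.1 p.2 e)

/-- The Weak Determining Property. -/
def HasWeakDeterminingProperty : Prop :=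
  ∀ (A : Type u) [L.Structure A], A ⊨ T → Nonempty A →
    (∀ θ θ' : Congruence L A, Complementary θ θ' →
      ∃! p : (Fin l → A) × (Fin l → A), Between z o θ θ' p.1 ∧ Between o z θ θ' p.2) ∧
    (∀ (θ θ' : Congruence L A) (e f : Fin l → A), Complementary θ θ' →
      Between z o θ θ' e → Between o z θ θ' f → AreComplementaryCentral z o e f) ∧
    (∀ e f : Fin l → A, AreComplementaryCentral z o e f →
      ∃! p : Congruence L A × Congruence L A,
        Complementary p.1 p.2 ∧ Between z o p.1 p.2 e ∧ Between o z p.1 p.2 f)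

/-- Definable Factor Congruences. -/
def HasDFC : Prop :=
  ∃ Φ : L.Formula (Fin 2 ⊕ Fin l),
    ∀ (A : Type u) (B : Type u) [L.Structure A] [L.Structure B],
      A ⊨ T → B ⊨ T → Nonempty A → Nonempty B →
        ∀ (a c : A) (b d : B),
          Φ.Realize (Sum.elim (![((a, b) : A × B), (c, d)])
            fun i => ((interp A (z i), interp B (o i)) : A × B)) ↔ a = c

/-- Definability with both `[0⃗,1⃗]` and `[1⃗,0⃗]` as parameters. -/
def HasDFC' : Prop :=
  ∃ Φ : L.Formula (Fin 2 ⊕ (Fin l ⊕ Fin l)),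
    ∀ (A : Type u) (B : Type u) [L.Structure A] [L.Structure B],
      A ⊨ T → B ⊨ T → Nonempty A → Nonempty B →
        ∀ (a c : A) (b d : B),
          Φ.Realize (Sum.elim (![((a, b) : A × B), (c, d)])
            (Sum.elim (fun i => ((interp A (z i), interp B (o i)) : A × B))
              fun i => ((interp A (o i), interp B (z i)) : A × B))) ↔ a = c

/-- Boolean Factor Congruences. -/
def HasBFC : Prop :=
  ∀ (A : Type u) [L.Structure A], A ⊨ T → Nonempty A →
    (∀ θ φ : Congruence L A, IsFactorCongruence θ → IsFactorCongruence φ →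
      IsFactorCongruence (θ.inf φ) ∧ IsFactorCongruence (θ.sup φ)) ∧
    (∀ θ φ ψ : Congruence L A, IsFactorCongruence θ → IsFactorCongruence φ →
      IsFactorCongruence ψ →
        (θ.inf (φ.sup ψ)).rel = ((θ.inf φ).sup (θ.inf ψ)).rel)

end Paper

namespace Paper

variable {L : FirstOrder.Language.{v, w}}

section Product

variable {A B : Type u} [L.Structure A] [L.Structure B]

theorem realize_prod {α : Type*} (t : L.Term α) (v : α → A × B) :
    t.realize v = (t.realize fun a => (v a).1, t.realize fun a => (v a).2) := by
  induction t with
  | var => rfl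
  | func f ts ih => simp only [Term.realize_func, ih]; rfl

theorem interp_prod (t : L.Term Empty) : interp (A × B) t = (interp A t, interp B t) := by
  simp only [interp, realize_prod]
  congr <;> funext x <;> exact x.elim

theorem interp_map {F : Type*} [FunLike F A B] [HomClass L F A B] (φ : F) (t : L.Term Empty) :
    φ (interp A t) = interp B t := by
  rw [interp, ← HomClass.realize_term]
  exact congrArg t.realize (funext fun x => x.elim)

theorem IsEquational.prod_model {T : L.Theory} (hT : IsEquational T) (hA : A ⊨ T)
    (hB : B ⊨ T) : (A × B) ⊨ T := by
  refine (Theory.model_iff _).2 fun φ hφ => ?_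
  obtain ⟨n, t₁, t₂, rfl⟩ := hT φ hφ
  have hA' : A ⊨ (t₁.bdEqual t₂).alls := T.realize_sentence_of_mem hφ
  have hB' : B ⊨ (t₁.bdEqual t₂).alls := T.realize_sentence_of_mem hφ
  simp only [Sentence.Realize, BoundedFormula.realize_alls,
    BoundedFormula.realize_bdEqual] at hA' hB' ⊢
  intro xs
  have hfst : (fun a => (Sum.elim (default : Empty → A × B) xs a).1) =
      Sum.elim default fun i => (xs i).1 := by
    funext a; rcases a with a | i; exacts [a.elim, rfl]
  have hsnd : (fun a => (Sum.elim (default : Empty → A × B) xs a).2) =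
      Sum.elim default fun i => (xs i).2 := by
    funext a; rcases a with a | i; exacts [a.elim, rfl]
  rw [realize_prod, realize_prod, hfst, hsnd, hA', hB']

def prodComm : A × B ≃[L] B × A where
  toEquiv := Equiv.prodComm A B
  map_fun' _ _ := rfl
  map_rel' _ _ := and_comm

def swapSnd : (A × B) × (A × B) ≃[L] (A × B) × (A × B) where
  toFun p := ((p.1.1, p.2.2), (p.2.1, p.1.2))
  invFun p := ((p.1.1, p.2.2), (p.2.1, p.1.2))
  left_inv _ := rfl
  right_inv _ := rfl
  map_fun' _ _ := rfl
  map_rel' _ _ := by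
    simp only [Structure.RelMap, Function.comp_apply]
    tauto

end Product

namespace Congruence

variable {A B : Type u} [L.Structure A] [L.Structure B]

def comap {F : Type*} [FunLike F A B] [HomClass L F A B] (φ : F) (θ : Congruence L B) :
    Congruence L A where
  rel a b := θ.rel (φ a) (φ b)
  refl _ := θ.refl _
  symm := θ.symm
  trans := θ.trans
  compat f x y h := by
    simpa only [HomClass.map_fun] using θ.compat f (φ ∘ x) (φ ∘ y) h

def prod (θ : Congruence L A) (φ : Congruence L B) : Congruence L (A × B) where
  rel p q := θ.rel p.1 q.1 ∧ φ.rel p.2 q.2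
  refl _ := ⟨θ.refl _, φ.refl _⟩
  symm h := ⟨θ.symm h.1, φ.symm h.2⟩
  trans h h' := ⟨θ.trans h.1 h'.1, φ.trans h.2 h'.2⟩
  compat f _ _ h := ⟨θ.compat f _ _ fun i => (h i).1, φ.compat f _ _ fun i => (h i).2⟩

def FstIndependent (θ : Congruence L (A × B)) : Prop :=
  ∀ ⦃a b : A⦄ ⦃x y : B⦄, θ.rel (a, x) (b, y) → ∀ w, θ.rel (a, w) (b, w)

def fst (θ : Congruence L (A × B)) (hθ : θ.FstIndependent) : Congruence L A where
  rel a b := ∀ x, θ.rel (a, x) (b, x)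
  refl _ _ := θ.refl _
  symm h x := θ.symm (h x)
  trans h h' x := θ.trans (h x) (h' x)
  compat f u v h x := hθ (θ.compat f (fun i => (u i, x)) (fun i => (v i, x)) fun i => h i x) x

end Congruence

section Transfer

variable {A B : Type u} [L.Structure A] [L.Structure B]

theorem Complementary.comap {θ θ' : Congruence L B} (h : Complementary θ θ') (φ : A ≃[L] B) :
    Complementary (θ.comap φ) (θ'.comap φ) := by
  refine ⟨fun a b hab hab' => φ.injective (h.1 _ _ hab hab'), fun a b => ?_⟩
  obtain ⟨c, hac, hcb⟩ := h.2 (φ a) (φ b)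
  exact ⟨φ.symm c, by simpa [Congruence.comap] using hac, by simpa [Congruence.comap] using hcb⟩

theorem Complementary.prod {θ θ' : Congruence L A} {φ φ' : Congruence L B}
    (hθ : Complementary θ θ') (hφ : Complementary φ φ') :
    Complementary (θ.prod φ) (θ'.prod φ') := by
  refine ⟨fun p q h h' => Prod.ext (hθ.1 _ _ h.1 h'.1) (hφ.1 _ _ h.2 h'.2), fun p q => ?_⟩
  obtain ⟨c, hc, hc'⟩ := hθ.2 p.1 q.1
  obtain ⟨d, hd, hd'⟩ := hφ.2 p.2 q.2
  exact ⟨(c, d), ⟨hc, hd⟩, ⟨hc', hd'⟩⟩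

theorem Complementary.fst [Nonempty B] {θ θ' : Congruence L (A × B)}
    (h : Complementary θ θ') (hθ : θ.FstIndependent) (hθ' : θ'.FstIndependent) :
    Complementary (θ.fst hθ) (θ'.fst hθ') := by
  obtain ⟨x₀⟩ := ‹Nonempty B›
  refine ⟨fun a b hab hab' => congrArg Prod.fst (h.1 _ _ (hab x₀) (hab' x₀)), fun a b => ?_⟩
  obtain ⟨c, hac, hcb⟩ := h.2 (a, x₀) (b, x₀)
  exact ⟨c.1, hθ hac, hθ' hcb⟩

variable {l : ℕ} {z o : Fin l → L.Term Empty}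

theorem Between.comap {F : Type*} [FunLike F A B] [HomClass L F A B] (φ : F)
    {θ θ' : Congruence L B} {e : Fin l → A} (h : Between z o θ θ' (φ ∘ e)) :
    Between z o (θ.comap φ) (θ'.comap φ) e :=
  ⟨fun i => by simpa [Congruence.comap, interp_map] using h.1 i,
    fun i => by simpa [Congruence.comap, interp_map] using h.2 i⟩

theorem Between.prod {θ θ' : Congruence L A} {φ φ' : Congruence L B} {e : Fin l → A}
    {f : Fin l → B} (he : Between z o θ θ' e) (hf : Between z o φ φ' f) :
    Between z o (θ.prod φ) (θ'.prod φ') fun i => (e i, f i) :=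
  ⟨fun i => by simpa [Congruence.prod, interp_prod] using And.intro (he.1 i) (hf.1 i),
    fun i => by simpa [Congruence.prod, interp_prod] using And.intro (he.2 i) (hf.2 i)⟩

theorem Between.fst {θ θ' : Congruence L (A × B)} {e : Fin l → A × B}
    (h : Between z o θ θ' e) (hθ : θ.FstIndependent) (hθ' : θ'.FstIndependent) :
    Between z o (θ.fst hθ) (θ'.fst hθ') fun i => (e i).1 :=
  ⟨fun i => hθ (by simpa [interp_prod] using h.1 i),
    fun i => hθ' (by simpa [interp_prod] using h.2 i)⟩

theorem IsCentral.map {e : Fin l → A} (he : IsCentral z o e) (φ : A ≃[L] B) :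
    IsCentral z o (φ ∘ e) := by
  obtain ⟨A₁, A₂, _, _, g, hg⟩ := he
  exact ⟨A₁, A₂, _, _, g.comp φ.symm, fun i => by simpa using hg i⟩

end Transfer

theorem Congruence.fstIndependent_of_comap_swapSnd {A B : Type u} [L.Structure A]
    [L.Structure B] {θ : Congruence L (A × B)} (h : (θ.prod θ).comap swapSnd = θ.prod θ) :
    θ.FstIndependent := by
  intro a b x y hab w
  have hswap : ((θ.prod θ).comap swapSnd).rel ((a, x), (a, w)) ((b, y), (a, w)) :=
    h ▸ ⟨hab, θ.refl _⟩
  exact hswap.1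

namespace HasDeterminingProperty

variable {T : L.Theory} {l : ℕ} {z o : Fin l → L.Term Empty}

theorem pair_eq (hDet : HasDeterminingProperty.{u} z o T) {A : Type u} [L.Structure A]
    (hA : A ⊨ T) [Nonempty A] {θ θ' φ φ' : Congruence L A} {e : Fin l → A}
    (hθ : Complementary θ θ') (hθe : Between z o θ θ' e)
    (hφ : Complementary φ φ') (hφe : Between z o φ φ' e) : (θ, θ') = (φ, φ') := by
  obtain ⟨-, hcentral, hunique⟩ := hDet A hA ‹_›
  obtain ⟨_, -, hp⟩ := hunique e (hcentral θ θ' e hθ hθe)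
  exact (hp _ ⟨hθ, hθe⟩).trans (hp _ ⟨hφ, hφe⟩).symm

theorem isCentral_fst (hDet : HasDeterminingProperty.{u} z o T) (hT : IsEquational T)
    {A B : Type u} [L.Structure A] [L.Structure B] (hA : A ⊨ T) (hB : B ⊨ T)
    [Nonempty A] [Nonempty B] {e : Fin l → A × B} (he : IsCentral z o e) :
    IsCentral z o fun i => (e i).1 := by
  have hP : (A × B) ⊨ T := hT.prod_model hA hB
  obtain ⟨⟨θ, θ'⟩, ⟨hc, hbe⟩, -⟩ := (hDet _ hP inferInstance).2.2 e he
  have hsq : Between z o (θ.prod θ) (θ'.prod θ') fun i => (e i, e i) := hbe.prod hbe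
  obtain ⟨hθ, hθ'⟩ := Prod.ext_iff.1 <| hDet.pair_eq (hT.prod_model hP hP)
    ((hc.prod hc).comap swapSnd) (hsq.comap swapSnd) (hc.prod hc) hsq
  exact (hDet A hA ‹_›).2.1 _ _ _
    (hc.fst (Congruence.fstIndependent_of_comap_swapSnd hθ)
      (Congruence.fstIndependent_of_comap_swapSnd hθ'))
    (hbe.fst _ _)

end HasDeterminingProperty

end Paper

theorem central_of_prod_central_general {L : FirstOrder.Language.{v, w}}
    (T : L.Theory) (hT : Paper.IsEquational T) {l : ℕ} (z o : Fin l → L.Term Empty)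
    (hDet : Paper.HasDeterminingProperty.{u} z o T)
    (A₀ : Type u) (A₁ : Type u) [L.Structure A₀] [L.Structure A₁]
    (h₀ : A₀ ⊨ T) (h₁ : A₁ ⊨ T) (hne₀ : Nonempty A₀) (hne₁ : Nonempty A₁)
    (e : Fin l → A₀ × A₁) (he : Paper.IsCentral z o e) :
    Paper.IsCentral z o (fun i => (e i).1) ∧ Paper.IsCentral z o (fun i => (e i).2) :=
  ⟨hDet.isCentral_fst hT h₀ h₁ he, hDet.isCentral_fst hT h₁ h₀ (he.map Paper.prodComm)⟩

/-- **Corollary 4.2.** In a variety with `0⃗` & `1⃗` having the Determining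
Property, if `[e⃗₀, e⃗₁]` is a central element of `A₀ × A₁`, then each `e⃗ᵢ` is a
central element of `Aᵢ`. -/
theorem central_of_prod_central {L : FirstOrder.Language.{v, w}}
    (T : L.Theory) (hT : Paper.IsEquational T) {l : ℕ} (z o : Fin l → L.Term Empty)
    (h01 : Paper.HasZeroOne.{u} T z o)
    (hDet : Paper.HasDeterminingProperty.{u} z o T)
    (A₀ : Type u) (A₁ : Type u) [L.Structure A₀] [L.Structure A₁]
    (h₀ : A₀ ⊨ T) (h₁ : A₁ ⊨ T) (hne₀ : Nonempty A₀) (hne₁ : Nonempty A₁)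
    (e : Fin l → A₀ × A₁) (he : Paper.IsCentral z o e) :
    Paper.IsCentral z o (fun i => (e i).1) ∧ Paper.IsCentral z o (fun i => (e i).2) :=
  central_of_prod_central_general T hT z o hDet A₀ A₁ h₀ h₁ hne₀ hne₁ e he
end

section
/- The variety V_L is a variety with 0⃗ & 1⃗ that does not have Definable Factor Congruences: there is no first-order formula Φ(x,y,z) in the language {+,*,0,1} such that for all A, B ∈ V_L, a,c ∈ A and b,d ∈ B, A×B ⊨ Φ(⟨a,b⟩,⟨c,d⟩,(0,1)) if and only if a = c. Equivalently, V_L does not have Boolean Factor Congruences. -/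
open FirstOrder Language

universe u v w

namespace Paper

/-- The function symbols `{+, *, 0, 1}` of the language of `V_L`. -/
inductive LFn : ℕ → Type
  | add : LFn 2
  | mul : LFn 2
  | zero : LFn 0
  | one : LFn 0

/-- The language `{+, *, 0, 1}`. -/
def LL : FirstOrder.Language := ⟨LFn, fun _ => Empty⟩

/-- The variable `x`. -/
def xT : LL.Term (Empty ⊕ Fin 1) := Term.var (Sum.inr 0)

/-- The closed term `0`. -/
def zeroT {α : Type*} : LL.Term α := Term.func LFn.zero ![]

/-- The closed term `1`. -/
def oneT {α : Type*} : LL.Term α := Term.func LFn.one ![]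

/-- `t + u`. -/
def addT {α : Type*} (t u : LL.Term α) : LL.Term α := Term.func LFn.add ![t, u]

/-- `t * u`. -/
def mulT {α : Type*} (t u : LL.Term α) : LL.Term α := Term.func LFn.mul ![t, u]

/-- The theory of `V_L`: `x + 0 = x`, `x + 1 = x * 1`, `x * 0 = 0`. -/
def TL : LL.Theory :=
  {((addT xT zeroT).bdEqual xT).alls,
   ((addT xT oneT).bdEqual (mulT xT oneT)).alls,
   ((mulT xT zeroT).bdEqual zeroT).alls}

end Paper

/-!
Let `C = Fin 4 × Fin 3`, a product of two members of `V_L`. The transposition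
`(2, 2) ↔ (3, 2)` is an automorphism of `C` fixing `⟨0, 1⟩` but not preserving the kernel `φ`
of the first projection. Formulas with parameters `⟨0, 1⟩` are invariant under such
automorphisms, so none of them defines `φ`. The image `ψ` of `φ` under the automorphism is again
a factor congruence; with `θ` the kernel of the second projection, `(2, 0)` and `(3, 0)` are
related by `θ ∧ (φ ∨ ψ)` (through `(2, 2)`), while `θ ∧ φ` and `θ ∧ ψ` are both the identity, so
the factor congruences of `C` are not distributive.
-/

namespace Paper

section General

variable {L : FirstOrder.Language.{v, w}} {A : Type u} [L.Structure A]

def Congruence.bot : Congruence L A where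
  rel := Eq
  refl := Eq.refl
  symm := Eq.symm
  trans := Eq.trans
  compat f _ _ h := congrArg (Structure.funMap f) (funext h)

def Congruence.comap_s15 {B : Type*} [L.Structure B] (g : A →[L] B) (θ : Congruence L B) :
    Congruence L A where
  rel a b := θ.rel (g a) (g b)
  refl a := θ.refl (g a)
  symm := θ.symm
  trans := θ.trans
  compat f x y h := by
    simpa only [HomClass.map_fun] using θ.compat f (g ∘ x) (g ∘ y) h

theorem Complementary.symm {θ θ' : Congruence L A} (h : Complementary θ θ') :
    Complementary θ' θ := by
  refine ⟨fun a b h' hθ => h.1 a b hθ h', fun a b => ?_⟩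
  obtain ⟨c, hbc, hca⟩ := h.2 b a
  exact ⟨c, θ'.symm hca, θ.symm hbc⟩

theorem Complementary.comap_s15 {B : Type*} [L.Structure B] {θ θ' : Congruence L B}
    (h : Complementary θ θ') (e : A ≃[L] B) :
    Complementary (θ.comap_s15 e.toHom) (θ'.comap_s15 e.toHom) := by
  refine ⟨fun a b hθ hθ' => e.injective (h.1 _ _ hθ hθ'), fun a b => ?_⟩
  obtain ⟨c, hac, hcb⟩ := h.2 (e a) (e b)
  exact ⟨e.symm c, show θ.rel (e a) (e (e.symm c)) by rwa [e.apply_symm_apply],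
    show θ'.rel (e (e.symm c)) (e b) by rwa [e.apply_symm_apply]⟩

theorem IsFactorCongruence.comap_s15 {B : Type*} [L.Structure B] {θ : Congruence L B}
    (h : IsFactorCongruence θ) (e : A ≃[L] B) : IsFactorCongruence (θ.comap_s15 e.toHom) :=
  let ⟨θ', hθ'⟩ := h
  ⟨θ'.comap_s15 e.toHom, hθ'.comap_s15 e⟩

variable (A) (B : Type*) [L.Structure B]

def Congruence.kerFst : Congruence L (A × B) where
  rel x y := x.1 = y.1
  refl _ := rfl
  symm := Eq.symm
  trans := Eq.trans
  compat f _ _ h := congrArg (Structure.funMap f) (funext h)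

def Congruence.kerSnd : Congruence L (A × B) where
  rel x y := x.2 = y.2
  refl _ := rfl
  symm := Eq.symm
  trans := Eq.trans
  compat f _ _ h := congrArg (Structure.funMap f) (funext h)

theorem complementary_kerFst_kerSnd :
    Complementary (Congruence.kerFst (L := L) A B) (Congruence.kerSnd A B) :=
  ⟨fun _ _ h₁ h₂ => Prod.ext h₁ h₂, fun a b => ⟨(a.1, b.2), rfl, rfl⟩⟩

theorem isFactorCongruence_kerFst : IsFactorCongruence (Congruence.kerFst (L := L) A B) :=
  ⟨_, complementary_kerFst_kerSnd A B⟩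

theorem isFactorCongruence_kerSnd : IsFactorCongruence (Congruence.kerSnd (L := L) A B) :=
  ⟨_, (complementary_kerFst_kerSnd A B).symm⟩

variable {A B}

theorem Congruence.inf_sup_rel_ne {θ φ ψ : Congruence L A}
    (hφ : ∀ a b, θ.rel a b → φ.rel a b → a = b) (hψ : ∀ a b, θ.rel a b → ψ.rel a b → a = b)
    {a b c : A} (hab : a ≠ b) (hθ : θ.rel a b) (hφ' : φ.rel a c) (hψ' : ψ.rel c b) :
    (θ.inf (φ.sup ψ)).rel ≠ ((θ.inf φ).sup (θ.inf ψ)).rel := by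
  intro h
  have hsup : ((θ.inf φ).sup (θ.inf ψ)).rel a b :=
    h ▸ ⟨hθ, fun χ hφχ hψχ => χ.trans (hφχ a c hφ') (hψχ c b hψ')⟩
  exact hab (hsup Congruence.bot (fun x y hxy => hφ x y hxy.1 hxy.2)
    fun x y hxy => hψ x y hxy.1 hxy.2)

variable {l : ℕ} {z o : Fin l → L.Term Empty} {T : L.Theory}

theorem not_hasDFC_of_equiv {A B : Type u} [L.Structure A] [L.Structure B]
    (hA : A ⊨ T) (hB : B ⊨ T) (σ : (A × B) ≃[L] (A × B))
    (hσ : ∀ i, σ (interp A (z i), interp B (o i)) = (interp A (z i), interp B (o i)))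
    {x y : A × B} (hxy : x.1 = y.1) (hσxy : (σ x).1 ≠ (σ y).1) : ¬HasDFC.{u} z o T := by
  rintro ⟨Φ, hΦ⟩
  have hdef := hΦ A B hA hB ⟨x.1⟩ ⟨x.2⟩
  have hσv : σ ∘ Sum.elim ![x, y] (fun i => (interp A (z i), interp B (o i))) =
      Sum.elim ![σ x, σ y] (fun i => (interp A (z i), interp B (o i))) := by
    funext s
    rcases s with i | i
    · fin_cases i <;> rfl
    · exact hσ i
  have hx : Φ.Realize (Sum.elim ![x, y] fun i => (interp A (z i), interp B (o i))) :=
    (hdef x.1 y.1 x.2 y.2).2 hxy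
  rw [← StrongHomClass.realize_formula σ, hσv] at hx
  exact hσxy ((hdef (σ x).1 (σ y).1 (σ x).2 (σ y).2).1 hx)

end General

namespace LL

variable {M : Type*} [LL.Structure M]

def add (x y : M) : M := Structure.funMap (L := LL) LFn.add ![x, y]

def mul (x y : M) : M := Structure.funMap (L := LL) LFn.mul ![x, y]

def zero : M := Structure.funMap (L := LL) LFn.zero ![]

def one : M := Structure.funMap (L := LL) LFn.one ![]

variable {α : Type*} (v : α → M)

@[simp]
theorem realize_zeroT : (zeroT : LL.Term α).realize v = zero :=
  congrArg (Structure.funMap _) (funext fun i => i.elim0)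

@[simp]
theorem realize_oneT : (oneT : LL.Term α).realize v = one :=
  congrArg (Structure.funMap _) (funext fun i => i.elim0)

@[simp]
theorem realize_addT (t u : LL.Term α) : (addT t u).realize v = add (t.realize v) (u.realize v) :=
  Term.realize_functions_apply₂

@[simp]
theorem realize_mulT (t u : LL.Term α) : (mulT t u).realize v = mul (t.realize v) (u.realize v) :=
  Term.realize_functions_apply₂

theorem funMap_add (x : Fin 2 → M) : Structure.funMap (L := LL) LFn.add x = add (x 0) (x 1) :=
  congrArg (Structure.funMap _) (funext fun i => by fin_cases i <;> rfl)

theorem funMap_mul (x : Fin 2 → M) : Structure.funMap (L := LL) LFn.mul x = mul (x 0) (x 1) :=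
  congrArg (Structure.funMap _) (funext fun i => by fin_cases i <;> rfl)

theorem funMap_zero (x : Fin 0 → M) : Structure.funMap (L := LL) LFn.zero x = zero :=
  congrArg (Structure.funMap _) (Subsingleton.elim _ _)

theorem funMap_one (x : Fin 0 → M) : Structure.funMap (L := LL) LFn.one x = one :=
  congrArg (Structure.funMap _) (Subsingleton.elim _ _)

def equivOfMap {N : Type*} [LL.Structure N] (e : M ≃ N)
    (hadd : ∀ x y, e (add x y) = add (e x) (e y)) (hmul : ∀ x y, e (mul x y) = mul (e x) (e y))
    (hzero : e zero = zero) (hone : e one = one) : M ≃[LL] N where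
  toEquiv := e
  map_fun' {_} f x := by
    cases f with
    | add => rw [funMap_add, funMap_add]; exact hadd (x 0) (x 1)
    | mul => rw [funMap_mul, funMap_mul]; exact hmul (x 0) (x 1)
    | zero => rw [funMap_zero, funMap_zero]; exact hzero
    | one => rw [funMap_one, funMap_one]; exact hone
  map_rel' r := r.elim

theorem interp_zeroT : interp M zeroT = zero := realize_zeroT _

theorem interp_oneT : interp M oneT = one := realize_oneT _

end LL

open LL

theorem model_TL_iff {M : Type*} [LL.Structure M] :
    M ⊨ TL ↔ ∀ x : M, add x zero = x ∧ add x one = mul x one ∧ mul x zero = zero := by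
  simp only [Theory.model_iff, TL, Set.mem_insert_iff, Set.mem_singleton_iff, forall_eq_or_imp,
    forall_eq, Sentence.Realize, BoundedFormula.realize_alls, BoundedFormula.realize_bdEqual,
    realize_addT, realize_mulT, realize_zeroT, realize_oneT, xT, Term.realize_var, Sum.elim_inr,
    Fin.forall_fin_succ_pi, Fin.forall_fin_zero_pi, Fin.cons_zero, forall_and]

theorem isEquational_TL : IsEquational TL := by
  simp only [IsEquational, TL, Set.mem_insert_iff, Set.mem_singleton_iff, forall_eq_or_imp,
    forall_eq]
  exact ⟨⟨1, _, _, rfl⟩, ⟨1, _, _, rfl⟩, ⟨1, _, _, rfl⟩⟩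

theorem hasZeroOne_TL : HasZeroOne.{u} TL ![zeroT] ![oneT] := by
  intro M _ hM _ h x y
  have h01 : (zero : M) = one := by simpa [interp_zeroT, interp_oneT] using h 0
  have hM := model_TL_iff.1 hM
  have collapse : ∀ t : M, t = zero := fun t =>
    calc t = add t zero := (hM t).1.symm
      _ = mul t zero := by rw [h01, (hM t).2.1]
      _ = zero := (hM t).2.2
  rw [collapse x, collapse y]

instance fin4Structure : LL.Structure (Fin 4) where
  funMap {_} f x := match f with
    | .add => if x 1 = 0 then x 0 else 0
    | .mul => 0
    | .zero => 0
    | .one => 1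
  RelMap r := r.elim

instance fin3Structure : LL.Structure (Fin 3) where
  funMap {_} f x := match f with
    | .add => if x 1 = 0 then x 0 else if x 0 = 2 then 2 else 0
    | .mul => if x 0 = 2 ∧ x 1 = 1 then 2 else 0
    | .zero => 0
    | .one => 1
  RelMap r := r.elim

theorem fin4_model_TL : Fin 4 ⊨ TL := model_TL_iff.2 (by decide)

theorem fin3_model_TL : Fin 3 ⊨ TL := model_TL_iff.2 (by decide)

theorem prod_model_TL : (Fin 4 × Fin 3) ⊨ TL := model_TL_iff.2 (by decide)

/-- The transposition `(2, 2) ↔ (3, 2)` applies the automorphism `2 ↔ 3` of `Fin 4` on the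
fibre over `2 ∈ Fin 3` only. This respects the operations: a second coordinate `2` in a result
forces second coordinate `2` in the first argument, and the operations of `Fin 4` see their
second argument only through whether it is `0`. -/
def swapFibre : (Fin 4 × Fin 3) ≃[LL] (Fin 4 × Fin 3) :=
  equivOfMap (Equiv.swap (2, 2) (3, 2)) (by decide) (by decide) (by decide) (by decide)

theorem not_hasDFC_TL : ¬HasDFC.{0} ![zeroT] ![oneT] TL :=
  not_hasDFC_of_equiv fin4_model_TL fin3_model_TL swapFibre (by decide)
    (x := (2, 2)) (y := (2, 0)) rfl (by decide)

theorem not_hasBFC_TL : ¬HasBFC.{0} TL := by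
  intro h
  set kerFstSwapped := (Congruence.kerFst (L := LL) (Fin 4) (Fin 3)).comap_s15 swapFibre.toHom
  have hdistrib := (h _ prod_model_TL ⟨0⟩).2 _ _ kerFstSwapped (isFactorCongruence_kerSnd _ _)
    (isFactorCongruence_kerFst _ _) ((isFactorCongruence_kerFst _ _).comap_s15 swapFibre)
  have hdisjoint :
      ∀ a b : Fin 4 × Fin 3, a.2 = b.2 → (swapFibre a).1 = (swapFibre b).1 → a = b := by
    decide
  exact Congruence.inf_sup_rel_ne (fun a b h₂ h₁ => Prod.ext h₁ h₂) hdisjoint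
    (a := (2, 0)) (b := (3, 0)) (c := (2, 2)) (by decide) rfl rfl
    (show (swapFibre (2, 2)).1 = (swapFibre (3, 0)).1 by decide) hdistrib

end Paper

/-- **Section 6.1.** `V_L` is a variety with `0⃗` & `1⃗` (with `l = 1`) that has
neither Definable Factor Congruences nor Boolean Factor Congruences. -/
theorem VL_zeroOne_not_DFC_not_BFC :
    Paper.IsEquational Paper.TL ∧
    Paper.HasZeroOne.{0} Paper.TL ![Paper.zeroT] ![Paper.oneT] ∧
    ¬Paper.HasDFC.{0} ![Paper.zeroT] ![Paper.oneT] Paper.TL ∧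
    ¬Paper.HasBFC.{0} Paper.TL :=
  ⟨Paper.isEquational_TL, Paper.hasZeroOne_TL, Paper.not_hasDFC_TL, Paper.not_hasBFC_TL⟩
end

section
/- Let N be an even natural number and, for every word α over the alphabet {1,…,N} of length ≤ N, let τ_α = τ_α(x,y,z⃗,x₁,y₁,…,x_n,y_n) be a first-order formula preserved by direct products and by direct factors. For 1 ≤ m ≤ N define E_m := ⋀ {(⋀_{γ≠ε, |αγ|≤N} τ_{αγ}) → τ_α : m ≤ |α| ≤ N, |α| even} and O_m := ⋀ {(⋀_{γ≠ε, |αγ|≤N} τ_{αγ}) → τ_α : m ≤ |α| ≤ N, |α| odd}. Then the formula (∃y₁∀x₁ … ∃y_n∀x_n E₂) ∧ (∃x₁∀y₁ … ∃x_n∀y_n O₁) is preserved by direct factors and by direct products. -/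
open FirstOrder Language

universe u v w

namespace Paper

variable {L : FirstOrder.Language.{v, w}}

/-- A formula is preserved by direct factors. -/
def PreservedByFactors {α : Type*} (φ : L.Formula α) : Prop :=
  ∀ (A : Type u) (B : Type u) [L.Structure A] [L.Structure B] (v : α → A × B),
    φ.Realize v → φ.Realize (fun i => (v i).1) ∧ φ.Realize fun i => (v i).2

/-- A formula is preserved by (binary) direct products. -/
def PreservedByProducts {α : Type*} (φ : L.Formula α) : Prop :=
  ∀ (A : Type u) (B : Type u) [L.Structure A] [L.Structure B] (vA : α → A) (vB : α → B),
    φ.Realize vA → φ.Realize vB → φ.Realize fun i => ((vA i, vB i) : A × B)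

/-- The variable set `(x, y, z⃗, x₁, y₁, …, x_j, y_j)`. -/
inductive MVar (l j : ℕ) : Type
  | x : MVar l j
  | y : MVar l j
  | z (i : Fin l) : MVar l j
  | xa (i : Fin j) : MVar l j
  | yb (i : Fin j) : MVar l j

/-- The assignment `(x, y, z⃗, x⃗, y⃗) ↦ (c, d, e⃗, xs, ys)`. -/
def masg {A : Type u} {l j : ℕ} (c d : A) (e : Fin l → A) (xs ys : Fin j → A) :
    MVar l j → A
  | .x => c
  | .y => d
  | .z i => e i
  | .xa i => xs i
  | .yb i => ys i

variable {A : Type u} [L.Structure A] {l n : ℕ}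

/-- Satisfaction of `E_m` at the assignment `v`:
`E_m = ⋀ {(⋀_{γ≠ε} τ_{αγ}) → τ_α : m ≤ |α| ≤ N, |α| even}`. -/
def ESat (N : ℕ) (τ : List (Fin N) → L.Formula (MVar l n)) (m : ℕ)
    (v : MVar l n → A) : Prop :=
  ∀ α : List (Fin N), m ≤ α.length → α.length ≤ N → Even α.length →
    (∀ γ : List (Fin N), γ ≠ [] → (α ++ γ).length ≤ N → (τ (α ++ γ)).Realize v) →
    (τ α).Realize v

/-- Satisfaction of `O_m` at the assignment `v`:
`O_m = ⋀ {(⋀_{γ≠ε} τ_{αγ}) → τ_α : m ≤ |α| ≤ N, |α| odd}`. -/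
def OSat (N : ℕ) (τ : List (Fin N) → L.Formula (MVar l n)) (m : ℕ)
    (v : MVar l n → A) : Prop :=
  ∀ α : List (Fin N), m ≤ α.length → α.length ≤ N → Odd α.length →
    (∀ γ : List (Fin N), γ ≠ [] → (α ++ γ).length ≤ N → (τ (α ++ γ)).Realize v) →
    (τ α).Realize v

/-- The alternating quantifier prefix `∃ u₁ ∀ w₁ … ∃ u_m ∀ w_m, P us ws`: the
existentially quantified elements are collected in the first list, the universally
quantified ones in the second. -/
def AltSat (A : Type u) : ℕ → (List A → List A → Prop) → List A → List A → Prop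
  | 0, P, us, ws => P us ws
  | m + 1, P, us, ws => ∃ u : A, ∀ w : A, AltSat A m P (us ++ [u]) (ws ++ [w])

/-- Satisfaction of the formula
`(∃y₁∀x₁ … ∃y_n∀x_n E₂) ∧ (∃x₁∀y₁ … ∃x_n∀y_n O₁)` at `(c, d, e⃗)`. -/
def CombSat (N : ℕ) (τ : List (Fin N) → L.Formula (MVar l n))
    (c d : A) (e : Fin l → A) : Prop :=
  AltSat A n (fun bs as => ∀ (hb : bs.length = n) (ha : as.length = n),
    ESat N τ 2 (masg c d e (fun i => as.get (Fin.cast ha.symm i))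
      fun i => bs.get (Fin.cast hb.symm i))) [] [] ∧
  AltSat A n (fun as bs => ∀ (ha : as.length = n) (hb : bs.length = n),
    OSat N τ 1 (masg c d e (fun i => as.get (Fin.cast ha.symm i))
      fun i => bs.get (Fin.cast hb.symm i))) [] []

end Paper

/-!
Both conjuncts are games. In `∃y₁∀x₁ … ∃yₙ∀xₙ E₂` the `∃`-player wins a play if `τ_α` holds at
every nonempty word `α` of even length all of whose proper extensions satisfy it; in
`∃x₁∀y₁ … ∃xₙ∀yₙ O₁` the same for odd length, with the roles of the `xᵢ` and `yᵢ` swapped.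

Preservation by products is coordinatewise play of winning strategies of the factors. For a
factor `A` of `A × B`, the player in `A` simulates infinitely many plays `0, 1, 2, …` in `A × B`
at once, alternately of the two games, and glues the opponent moves of each play from its
neighbours' moves: plays `2k` and `2k+1` agree on `B`-coordinates, plays `2k+1` and `2k+2` on
`A`-coordinates, and the `A`-coordinates of play `0` form the actual play in `A`. As `τ_α` holds
in `A × B` iff it holds in both factors, the winning conditions of all plays combine, by
downward induction on `|α|`, to the winning condition of the projection of play `0` to `A`.
-/

namespace Paper

section Strategies

variable {X : Type u}

def plays (G : List X → X) (ws : List X) : List X :=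
  List.ofFn fun i : Fin ws.length => G (ws.take i)

@[simp] lemma length_plays (G : List X → X) (ws : List X) :
    (plays G ws).length = ws.length := by
  simp [plays]

lemma plays_cons (G : List X → X) (w : X) (ws : List X) :
    plays G (w :: ws) = G [] :: plays (fun h => G (w :: h)) ws := by
  simp [plays, List.ofFn_succ]

theorem altSat_iff_exists_strategy [Nonempty X] {P : List X → List X → Prop} (m : ℕ)
    (us ws : List X) :
    AltSat X m P us ws ↔
      ∃ G : List X → X, ∀ ext : List X, ext.length = m → P (us ++ plays G ext) (ws ++ ext) := by
  induction m generalizing us ws with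
  | zero => simp [AltSat, plays]
  | succ m ih =>
    simp only [AltSat, ih]
    constructor
    · rintro ⟨u, hu⟩
      choose G hG using hu
      refine ⟨fun | [] => u | w :: h => G w h, fun | w :: ext, hlen => ?_⟩
      simpa [plays_cons] using hG w ext (by simpa using hlen)
    · rintro ⟨G, hG⟩
      exact ⟨G [], fun w => ⟨fun h => G (w :: h), fun ext hlen => by
        simpa [plays_cons] using hG (w :: ext) (by simp [hlen])⟩⟩

def play (G : List X → X) (w : ℕ → X) (i : ℕ) : X :=
  G (List.ofFn fun j : Fin i => w j)

lemma plays_ofFn (G : List X → X) (w : ℕ → X) (n : ℕ) :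
    plays G (List.ofFn fun i : Fin n => w i) = List.ofFn fun i : Fin n => play G w i := by
  refine List.ext_get (by simp) fun i h₁ h₂ => ?_
  simp only [length_plays, List.length_ofFn] at h₁
  simp only [plays, play, List.get_eq_getElem, List.getElem_ofFn]
  congr 1
  refine List.ext_get (by simp; omega) fun j h₃ h₄ => ?_
  simp

theorem altSat_iff_exists_play [Nonempty X] {n : ℕ} (Q : (Fin n → X) → (Fin n → X) → Prop) :
    AltSat X n (fun us ws => ∀ (hu : us.length = n) (hw : ws.length = n),
        Q (fun i => us.get (Fin.cast hu.symm i)) fun i => ws.get (Fin.cast hw.symm i)) [] [] ↔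
      ∃ G : List X → X, ∀ w : ℕ → X, Q (fun i => play G w i) fun i => w i := by
  rw [altSat_iff_exists_strategy]
  refine exists_congr fun G => ⟨fun h w => ?_, fun h ext hlen => ?_⟩
  · simpa [plays_ofFn] using h (List.ofFn fun i : Fin n => w i) (by simp)
  · obtain ⟨x⟩ := ‹Nonempty X›
    obtain ⟨w, rfl⟩ : ∃ w : ℕ → X, ext = List.ofFn fun i : Fin n => w i := by
      subst hlen
      exact ⟨fun i => ext.getD i x, (List.ext_get (by simp) fun i h₁ h₂ => by simp).symm⟩
    simpa [plays_ofFn] using h w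

end Strategies

section ExtensionClosed

variable {β : Type*} {N : ℕ}

/-- `E₂` (resp. `O₁`) at an assignment `v` says that `fun α => (τ α).Realize v` is
`ExtensionClosed N q` for even (resp. odd) `q`. -/
def ExtensionClosed (N q : ℕ) (P : List β → Prop) : Prop :=
  ∀ α : List β, α ≠ [] → α.length ≤ N → Even (α.length + q) →
    (∀ γ : List β, γ ≠ [] → (α ++ γ).length ≤ N → P (α ++ γ)) → P α

lemma ExtensionClosed.congr {q : ℕ} {P P' : List β → Prop}
    (h : ∀ α : List β, α.length ≤ N → (P α ↔ P' α)) (hP : ExtensionClosed N q P) :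
    ExtensionClosed N q P' := fun α hα hαN hαq hext =>
  (h α hαN).1 (hP α hα hαN hαq fun γ hγ hγN => (h _ hγN).2 (hext γ hγ hγN))

lemma ExtensionClosed.and {q : ℕ} {P P' : List β → Prop} (hP : ExtensionClosed N q P)
    (hP' : ExtensionClosed N q P') : ExtensionClosed N q fun α => P α ∧ P' α :=
  fun α hα hαN hαq hext => ⟨hP α hα hαN hαq fun γ hγ hγN => (hext γ hγ hγN).1,
    hP' α hα hαN hαq fun γ hγ hγN => (hext γ hγ hγN).2⟩

lemma extensionClosed_congr_parity {q q' : ℕ} (h : Even q ↔ Even q') (P : List β → Prop) :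
    ExtensionClosed N q P ↔ ExtensionClosed N q' P := by
  simp only [ExtensionClosed, Nat.even_add, h]

theorem ExtensionClosed.zigzag {p : ℕ} {Q : ℕ → List β → Prop}
    (hQ : ∀ r, ExtensionClosed N (p + r) fun δ => Q r δ ∧ Q (r + 1) δ) :
    ExtensionClosed N p (Q 0) := by
  intro α hα hαN hαp hext
  have hall : ∀ t γ, γ ≠ [] → (α ++ γ).length + t = N → ∀ r, Q r (α ++ γ) := by
    intro t
    induction t using Nat.strong_induction_on with
    | _ t ih =>
    intro γ hγ hlen r
    have hext' : ∀ r γ', γ' ≠ [] → (α ++ γ ++ γ').length ≤ N → Q r (α ++ γ ++ γ') := by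
      intro r γ' hγ' hlen'
      have : γ'.length ≠ 0 := by simpa using hγ'
      rw [List.append_assoc]
      exact ih (N - (α ++ (γ ++ γ')).length) (by simp at hlen hlen' ⊢; omega) _
        (by simp [hγ]) (by simp at hlen' ⊢; omega) r
    have hne : α ++ γ ≠ [] := by simp [hγ]
    cases r with
    | zero => exact hext γ hγ (by omega)
    | succ r =>
      -- `Q (r + 1)` is delivered by the closure property of `r + 1` or of `r`, by parity.
      by_cases hpar : Even ((α ++ γ).length + (p + (r + 1)))
      · exact (hQ (r + 1) _ hne (by omega) hpar fun γ' hγ' h' =>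
          ⟨hext' _ γ' hγ' h', hext' _ γ' hγ' h'⟩).1
      · have hpar' : Even ((α ++ γ).length + (p + r)) := by
          simpa [← add_assoc, Nat.even_add_one] using hpar
        exact (hQ r _ hne (by omega) hpar' fun γ' hγ' h' =>
          ⟨hext' _ γ' hγ' h', hext' _ γ' hγ' h'⟩).2
  exact (hQ 0 α hα hαN hαp fun γ hγ hγN =>
    ⟨hext γ hγ hγN, hall _ γ hγ (Nat.add_sub_cancel' hγN) 1⟩).1

end ExtensionClosed

section Games

variable {L : FirstOrder.Language.{v, w}} {l n N : ℕ}

lemma comp_masg {X Y : Type u} (f : X → Y) (c d : X) (e : Fin l → X) (xs ys : Fin n → X) :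
    f ∘ masg c d e xs ys = masg (f c) (f d) (f ∘ e) (f ∘ xs) (f ∘ ys) := by
  funext m
  cases m <;> rfl

/-- The assignment of a play of the game of parity `q`: for even `q` the player's moves `u`
are the `yᵢ` and the opponent's moves `w` the `xᵢ`; for odd `q` the other way round. -/
def gameAsg {X : Type u} (q : ℕ) (c d : X) (e : Fin l → X) (u w : Fin n → X) : MVar l n → X :=
  if Even q then masg c d e w u else masg c d e u w

lemma comp_gameAsg {X Y : Type u} (f : X → Y) (q : ℕ) (c d : X) (e : Fin l → X)
    (u w : Fin n → X) :
    f ∘ gameAsg q c d e u w = gameAsg q (f c) (f d) (f ∘ e) (f ∘ u) (f ∘ w) := by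
  unfold gameAsg
  split_ifs <;> exact comp_masg ..

lemma comp_gameAsg_add_one {X Y : Type u} (f : X → Y) (q : ℕ) (c d : X) (e : Fin l → X)
    {u w u' w' : Fin n → X} (hu : f ∘ u = f ∘ w') (hw : f ∘ w = f ∘ u') :
    f ∘ gameAsg q c d e u w = f ∘ gameAsg (q + 1) c d e u' w' := by
  by_cases hq : Even q <;> simp [gameAsg, hq, Nat.even_add_one, comp_masg, hu, hw]

variable {X : Type u} [L.Structure X]

def Winning (N : ℕ) (τ : List (Fin N) → L.Formula (MVar l n)) (q : ℕ) (c d : X)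
    (e : Fin l → X) (G : List X → X) : Prop :=
  ∀ w : ℕ → X, ExtensionClosed N q fun α =>
    (τ α).Realize (gameAsg q c d e (fun i => play G w i) fun i => w i)

lemma winning_congr_parity {τ : List (Fin N) → L.Formula (MVar l n)} {q q' : ℕ}
    (h : Even q ↔ Even q') {c d : X} {e : Fin l → X} {G : List X → X} :
    Winning N τ q c d e G ↔ Winning N τ q' c d e G := by
  simp only [Winning, gameAsg, h, extensionClosed_congr_parity h]

theorem combSat_iff [Nonempty X] {τ : List (Fin N) → L.Formula (MVar l n)} {c d : X}
    {e : Fin l → X} : CombSat N τ c d e ↔ ∀ q, ∃ G, Winning N τ q c d e G := by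
  have hE (v : MVar l n → X) :
      ESat N τ 2 v ↔ ExtensionClosed N 0 fun α => (τ α).Realize v := by
    refine forall_congr' fun α => ⟨fun h hα hαN he => h ?_ hαN (by simpa using he),
      fun h h2 hαN he => h (List.ne_nil_of_length_pos (by omega)) hαN (by simpa using he)⟩
    obtain ⟨k, hk⟩ := he
    have := List.length_pos_iff.2 hα
    omega
  have hO (v : MVar l n → X) :
      OSat N τ 1 v ↔ ExtensionClosed N 1 fun α => (τ α).Realize v := by
    refine forall_congr' fun α => ⟨fun h hα hαN he => h (List.length_pos_iff.2 hα) hαN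
      (by simpa [Nat.even_add_one] using he), fun h _ hαN ho => h ?_ hαN
      (by simpa [Nat.even_add_one] using ho)⟩
    rintro rfl
    simp at ho
  have hW0 (G : List X → X) : Winning N τ 0 c d e G ↔ ∀ w : ℕ → X,
      ESat N τ 2 (masg c d e (fun i => w i) fun i => play G w i) := by
    simp [Winning, gameAsg, hE]
  have hW1 (G : List X → X) : Winning N τ 1 c d e G ↔ ∀ w : ℕ → X,
      OSat N τ 1 (masg c d e (fun i => play G w i) fun i => w i) := by
    simp [Winning, gameAsg, hO]
  rw [CombSat, altSat_iff_exists_play (fun u w => ESat N τ 2 (masg c d e w u)),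
    altSat_iff_exists_play (fun u w => OSat N τ 1 (masg c d e u w))]
  simp only [← hW0, ← hW1]
  refine ⟨fun ⟨h0, h1⟩ q => ?_, fun h => ⟨h 0, h 1⟩⟩
  rcases Nat.even_or_odd q with hq | hq
  · simpa only [winning_congr_parity (iff_of_true hq Even.zero)] using h0
  · simpa only [winning_congr_parity (iff_of_false (Nat.not_even_iff_odd.2 hq) Nat.not_even_one)]
      using h1

end Games

structure ProdDecomp (A B C : Type u) where
  fst : C → A
  snd : C → B
  pair : A → B → C
  fst_pair : ∀ a b, fst (pair a b) = a
  snd_pair : ∀ a b, snd (pair a b) = b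

def ProdDecomp.prod (A B : Type u) : ProdDecomp A B (A × B) :=
  ⟨Prod.fst, Prod.snd, Prod.mk, fun _ _ => rfl, fun _ _ => rfl⟩

def ProdDecomp.swap {A B C : Type u} (D : ProdDecomp A B C) : ProdDecomp B A C :=
  ⟨D.snd, D.fst, fun b a => D.pair a b, fun b a => D.snd_pair a b, fun b a => D.fst_pair a b⟩

section Runs

variable {A B C : Type u} (D : ProdDecomp A B C) (G : ℕ → List C → C)

/-- The moves of the `r`-th of infinitely many simultaneous plays in `C`, play `r` following
the strategy `G r`. Its opponent moves are glued with `D.pair` from the moves of its neighbours: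
plays `2k, 2k+1` share their `D.snd`-parts, plays `2k+1, 2k+2` their `D.fst`-parts, and the
`D.fst`-parts of play `0` are the opponent moves `ξ` of a play in `A`. -/
def runMove (ξ : ℕ → A) (r i : ℕ) : C :=
  G r (List.ofFn fun j : Fin i =>
    D.pair (if r = 0 then ξ j else D.fst (runMove ξ (if Even r then r - 1 else r + 1) j))
      (D.snd (runMove ξ (if Even r then r + 1 else r - 1) j)))
termination_by i

def runOpp (ξ : ℕ → A) (r j : ℕ) : C :=
  D.pair (if r = 0 then ξ j else D.fst (runMove D G ξ (if Even r then r - 1 else r + 1) j))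
    (D.snd (runMove D G ξ (if Even r then r + 1 else r - 1) j))

lemma runMove_eq_play (ξ : ℕ → A) (r i : ℕ) :
    runMove D G ξ r i = play (G r) (runOpp D G ξ r) i := by
  rw [runMove]
  rfl

lemma runMove_congr {ξ ξ' : ℕ → A} {i : ℕ} (h : ∀ j < i, ξ j = ξ' j) (r : ℕ) :
    runMove D G ξ r i = runMove D G ξ' r i := by
  induction i using Nat.strong_induction_on generalizing r with
  | _ i ih =>
  have ih' : ∀ j < i, ∀ r, runMove D G ξ r j = runMove D G ξ' r j :=
    fun j hj => ih j hj fun k hk => h k (hk.trans hj)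
  rw [runMove_eq_play, runMove_eq_play]
  unfold play runOpp
  congr 2
  funext j
  rw [ih' j j.isLt, ih' j j.isLt, h j j.isLt]

end Runs

section Decomposition

variable {L : FirstOrder.Language.{v, w}} {l n N : ℕ} {A B C : Type u}
  [L.Structure A] [L.Structure B] [L.Structure C]

def RealizeSplits (τ : List (Fin N) → L.Formula (MVar l n)) (D : ProdDecomp A B C) : Prop :=
  ∀ α : List (Fin N), α.length ≤ N → ∀ v : MVar l n → C,
    (τ α).Realize v ↔ (τ α).Realize (D.fst ∘ v) ∧ (τ α).Realize (D.snd ∘ v)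

variable {τ : List (Fin N) → L.Formula (MVar l n)} {D : ProdDecomp A B C}

lemma RealizeSplits.swap (hD : RealizeSplits τ D) : RealizeSplits τ D.swap :=
  fun α hα v => (hD α hα v).trans and_comm

theorem Winning.of_fst_snd (hD : RealizeSplits τ D) {q : ℕ} {c d : C} {e : Fin l → C}
    {GA : List A → A} {GB : List B → B} (hA : Winning N τ q (D.fst c) (D.fst d) (D.fst ∘ e) GA)
    (hB : Winning N τ q (D.snd c) (D.snd d) (D.snd ∘ e) GB) :
    Winning N τ q c d e fun h => D.pair (GA (h.map D.fst)) (GB (h.map D.snd)) := by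
  intro w
  refine ExtensionClosed.congr (fun α hα => (hD α hα _).symm) ?_
  simp only [comp_gameAsg]
  have hplay₁ : (D.fst ∘ fun i : Fin n => play (fun h => D.pair (GA (h.map D.fst))
      (GB (h.map D.snd))) w i) = fun i : Fin n => play GA (D.fst ∘ w) i := by
    funext i
    simp only [play, List.map_ofFn, Function.comp_def, D.fst_pair]
  have hplay₂ : (D.snd ∘ fun i : Fin n => play (fun h => D.pair (GA (h.map D.fst))
      (GB (h.map D.snd))) w i) = fun i : Fin n => play GB (D.snd ∘ w) i := by
    funext i
    simp only [play, List.map_ofFn, Function.comp_def, D.snd_pair]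
  rw [hplay₁, hplay₂]
  exact (hA (D.fst ∘ w)).and (hB (D.snd ∘ w))

theorem ExtensionClosed.fst_of_links (hD : RealizeSplits τ D) {p : ℕ} {v : ℕ → MVar l n → C}
    (hv : ∀ r, ExtensionClosed N (p + r) fun α => (τ α).Realize (v r))
    (hsnd : ∀ r, Even r → D.snd ∘ v r = D.snd ∘ v (r + 1))
    (hfst : ∀ r, Odd r → D.fst ∘ v r = D.fst ∘ v (r + 1)) :
    ExtensionClosed N p fun α => (τ α).Realize (D.fst ∘ v 0) := by
  let Q (r : ℕ) (α : List (Fin N)) : Prop :=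
    if Even r then (τ α).Realize (D.fst ∘ v r) else (τ α).Realize (D.snd ∘ v r)
  have hQ : ∀ r, ExtensionClosed N (p + r) fun α => Q r α ∧ Q (r + 1) α := by
    refine fun r => (hv r).congr fun α hα => (hD α hα (v r)).trans ?_
    by_cases hr : Even r
    · simp [Q, hr, Nat.even_add_one, hsnd r hr]
    · simp [Q, hr, Nat.even_add_one, hfst r (Nat.not_even_iff_odd.1 hr), and_comm]
  simpa [Q] using ExtensionClosed.zigzag hQ

theorem exists_winning_fst (hD : RealizeSplits τ D) {p : ℕ} {c d : C} {e : Fin l → C}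
    (hG : ∀ r, ∃ G, Winning N τ (p + r) c d e G) :
    ∃ GA, Winning N τ p (D.fst c) (D.fst d) (D.fst ∘ e) GA := by
  choose G hG using hG
  refine ⟨fun h => D.fst (runMove D G (fun j => h.getD j (D.fst c)) 0 h.length), fun ξ => ?_⟩
  let move (r : ℕ) (i : Fin n) : C := runMove D G ξ r i
  let opp (r : ℕ) (i : Fin n) : C := runOpp D G ξ r i
  let v (r : ℕ) : MVar l n → C := gameAsg (p + r) c d e (move r) (opp r)
  have hv (r : ℕ) : ExtensionClosed N (p + r) fun α => (τ α).Realize (v r) := by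
    simpa [v, move, runMove_eq_play] using hG r (runOpp D G ξ r)
  have hsnd (r : ℕ) (hr : Even r) : D.snd ∘ v r = D.snd ∘ v (r + 1) :=
    comp_gameAsg_add_one D.snd (p + r) c d e
      (by funext i; simp [move, opp, runOpp, D.snd_pair, hr, Nat.even_add_one])
      (by funext i; simp [move, opp, runOpp, D.snd_pair, hr])
  have hfst (r : ℕ) (hr : Odd r) : D.fst ∘ v r = D.fst ∘ v (r + 1) := by
    have hr0 : r ≠ 0 := by rintro rfl; simp at hr
    have hr' : ¬Even r := Nat.not_even_iff_odd.2 hr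
    exact comp_gameAsg_add_one D.fst (p + r) c d e
      (by funext i; simp [move, opp, runOpp, D.fst_pair, hr', Nat.even_add_one])
      (by funext i; simp [move, opp, runOpp, D.fst_pair, hr', hr0])
  have hplay : (fun i : Fin n => play (fun h => D.fst (runMove D G
      (fun j => h.getD j (D.fst c)) 0 h.length)) ξ i) = D.fst ∘ move 0 := by
    funext i
    simp only [play, List.length_ofFn, Function.comp_apply, move]
    exact congrArg D.fst (runMove_congr D G (fun j hj => by simp [hj]) 0)
  have hopp : D.fst ∘ opp 0 = fun i : Fin n => ξ i := by
    funext i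
    simp [opp, runOpp, D.fst_pair]
  simpa only [v, comp_gameAsg, hplay, hopp, add_zero] using
    ExtensionClosed.fst_of_links hD hv hsnd hfst

theorem CombSat.fst (hD : RealizeSplits τ D) {c d : C} {e : Fin l → C}
    (h : CombSat N τ c d e) : CombSat N τ (D.fst c) (D.fst d) (D.fst ∘ e) :=
  have : Nonempty C := ⟨c⟩
  have : Nonempty A := ⟨D.fst c⟩
  combSat_iff.2 fun p => exists_winning_fst hD fun r => combSat_iff.1 h (p + r)

theorem CombSat.of_fst_snd (hD : RealizeSplits τ D) {c d : C} {e : Fin l → C}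
    (hA : CombSat N τ (D.fst c) (D.fst d) (D.fst ∘ e))
    (hB : CombSat N τ (D.snd c) (D.snd d) (D.snd ∘ e)) : CombSat N τ c d e := by
  have : Nonempty C := ⟨c⟩
  have : Nonempty A := ⟨D.fst c⟩
  have : Nonempty B := ⟨D.snd c⟩
  refine combSat_iff.2 fun q => ?_
  obtain ⟨GA, hGA⟩ := combSat_iff.1 hA q
  obtain ⟨GB, hGB⟩ := combSat_iff.1 hB q
  exact ⟨_, Winning.of_fst_snd hD hGA hGB⟩

end Decomposition

end Paper

theorem combined_formula_preserved_general {L : FirstOrder.Language.{v, w}} {l n N : ℕ}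
    (τ : List (Fin N) → L.Formula (Paper.MVar l n))
    (hτ : ∀ α : List (Fin N), α.length ≤ N →
      Paper.PreservedByFactors.{u} (τ α) ∧ Paper.PreservedByProducts.{u} (τ α)) :
    (∀ (A : Type u) (B : Type u) [L.Structure A] [L.Structure B]
      (c d : A × B) (e : Fin l → A × B),
        Paper.CombSat N τ c d e →
          Paper.CombSat N τ c.1 d.1 (fun i => (e i).1) ∧
          Paper.CombSat N τ c.2 d.2 fun i => (e i).2) ∧
    (∀ (A : Type u) (B : Type u) [L.Structure A] [L.Structure B]
      (cA dA : A) (eA : Fin l → A) (cB dB : B) (eB : Fin l → B),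
        Paper.CombSat N τ cA dA eA → Paper.CombSat N τ cB dB eB →
          Paper.CombSat N τ ((cA, cB) : A × B) (dA, dB) fun i => (eA i, eB i)) := by
  have hsplit (A B : Type u) [L.Structure A] [L.Structure B] :
      Paper.RealizeSplits τ (Paper.ProdDecomp.prod A B) := fun α hα v =>
    ⟨(hτ α hα).1 A B v, fun h => (hτ α hα).2 A B _ _ h.1 h.2⟩
  exact ⟨fun A B _ _ c d e h => ⟨h.fst (hsplit A B), h.fst (hsplit A B).swap⟩,
    fun A B _ _ cA dA eA cB dB eB hA hB => Paper.CombSat.of_fst_snd (hsplit A B) hA hB⟩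

/-- **Theorem A.5 (Appendix, preservation result).** Let `N` be even and let the
`τ_α` (for words `α` over `{1,…,N}` of length `≤ N`) be formulas preserved by
direct products and by direct factors. Then the formula
`(∃y₁∀x₁ … ∃y_n∀x_n E₂) ∧ (∃x₁∀y₁ … ∃x_n∀y_n O₁)` is preserved by direct factors
and by direct products. -/
theorem combined_formula_preserved {L : FirstOrder.Language.{v, w}} {l n N : ℕ}
    (hN : Even N) (τ : List (Fin N) → L.Formula (Paper.MVar l n))
    (hτ : ∀ α : List (Fin N), α.length ≤ N →
      Paper.PreservedByFactors.{u} (τ α) ∧ Paper.PreservedByProducts.{u} (τ α)) :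
    (∀ (A : Type u) (B : Type u) [L.Structure A] [L.Structure B]
      (c d : A × B) (e : Fin l → A × B),
        Paper.CombSat N τ c d e →
          Paper.CombSat N τ c.1 d.1 (fun i => (e i).1) ∧
          Paper.CombSat N τ c.2 d.2 fun i => (e i).2) ∧
    (∀ (A : Type u) (B : Type u) [L.Structure A] [L.Structure B]
      (cA dA : A) (eA : Fin l → A) (cB dB : B) (eB : Fin l → B),
        Paper.CombSat N τ cA dA eA → Paper.CombSat N τ cB dB eB →
          Paper.CombSat N τ ((cA, cB) : A × B) (dA, dB) fun i => (eA i, eB i)) :=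
  combined_formula_preserved_general τ hτ
end
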